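/- With the same notation, for all ξ with 4γ|ξ|² < 3/4 and all t > 0, one has |K̂₀(ξ,t)| ≤ C e^{-|ξ|² t} and |K̂₁(ξ,t)| ≤ C e^{-|ξ|² t} for an absolute constant C. -/

import Mathlib

open Real

noncomputable section

/-- The square root of the discriminant `1 - 4γ|ξ|²`, interpreted as a purely
imaginary number when `1 - 4γ|ξ|² < 0`. -/
def discRoot (γ : ℝ) (ξ : EuclideanSpace ℝ (Fin 2)) : ℂ :=
  if 0 ≤ 1 - 4 * γ * ‖ξ‖ ^ 2 then ((Real.sqrt (1 - 4 * γ * ‖ξ‖ ^ 2) : ℝ) : ℂ)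
  else Complex.I * ((Real.sqrt (4 * γ * ‖ξ‖ ^ 2 - 1) : ℝ) : ℂ)

/-- `λ₊(ξ) = (-1 + √(1-4γ|ξ|²))/(2γ)`. -/
def lamPlus (γ : ℝ) (ξ : EuclideanSpace ℝ (Fin 2)) : ℂ :=
  (-1 + discRoot γ ξ) / (2 * (γ : ℂ))

/-- `λ₋(ξ) = (-1 - √(1-4γ|ξ|²))/(2γ)`. -/
def lamMinus (γ : ℝ) (ξ : EuclideanSpace ℝ (Fin 2)) : ℂ :=
  (-1 - discRoot γ ξ) / (2 * (γ : ℂ))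

/-- `K̂₀(ξ,t) = (e^{λ₊t} + e^{λ₋t})/2`. -/
def K0hat (γ : ℝ) (ξ : EuclideanSpace ℝ (Fin 2)) (t : ℝ) : ℂ :=
  (Complex.exp (lamPlus γ ξ * (t : ℂ)) + Complex.exp (lamMinus γ ξ * (t : ℂ))) / 2

/-- `K̂₁(ξ,t) = (e^{λ₊t} - e^{λ₋t})/(γ(λ₊ - λ₋))`. -/
def K1hat (γ : ℝ) (ξ : EuclideanSpace ℝ (Fin 2)) (t : ℝ) : ℂ :=
  (Complex.exp (lamPlus γ ξ * (t : ℂ)) - Complex.exp (lamMinus γ ξ * (t : ℂ))) /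
    ((γ : ℂ) * (lamPlus γ ξ - lamMinus γ ξ))

/-!
In the low-frequency region the discriminant `1 - 4γ|ξ|²` is positive, so `λ₊` and `λ₋` are real
with `λ₋ ≤ λ₊ ≤ -|ξ|²`; hence both exponentials are bounded by `e^{-|ξ|²t}`. For `K̂₁` the
denominator is `γ(λ₊ - λ₋) = √(1 - 4γ|ξ|²) ≥ 1/2`, which gives the constant `C = 4`.
-/

theorem neg_one_add_sqrt_div_le {γ r : ℝ} (hγ : 0 < γ) (h : 4 * γ * r ≤ 1) :
    (-1 + √(1 - 4 * γ * r)) / (2 * γ) ≤ -r := by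
  have hsqrt : √(1 - 4 * γ * r) ≤ 1 - 2 * γ * r :=
    Real.sqrt_le_iff.mpr ⟨by linarith, by nlinarith [sq_nonneg (2 * γ * r)]⟩
  rw [div_le_iff₀ (by positivity)]
  linarith

theorem norm_exp_mul_ofReal_le {z : ℂ} {r t : ℝ} (hz : z.re ≤ -r) (ht : 0 ≤ t) :
    ‖Complex.exp (z * t)‖ ≤ Real.exp (-(r * t)) := by
  rw [Complex.norm_exp, Complex.re_mul_ofReal, ← neg_mul]
  exact Real.exp_le_exp.mpr (mul_le_mul_of_nonneg_right hz ht)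

section

variable {γ : ℝ} {ξ : EuclideanSpace ℝ (Fin 2)}

theorem discRoot_of_nonneg (h : 0 ≤ 1 - 4 * γ * ‖ξ‖ ^ 2) :
    discRoot γ ξ = ((√(1 - 4 * γ * ‖ξ‖ ^ 2) : ℝ) : ℂ) := by
  rw [discRoot, if_pos h]

theorem lamPlus_of_nonneg (h : 0 ≤ 1 - 4 * γ * ‖ξ‖ ^ 2) :
    lamPlus γ ξ = (((-1 + √(1 - 4 * γ * ‖ξ‖ ^ 2)) / (2 * γ) : ℝ) : ℂ) := by
  rw [lamPlus, discRoot_of_nonneg h]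
  push_cast
  ring

theorem lamMinus_of_nonneg (h : 0 ≤ 1 - 4 * γ * ‖ξ‖ ^ 2) :
    lamMinus γ ξ = (((-1 - √(1 - 4 * γ * ‖ξ‖ ^ 2)) / (2 * γ) : ℝ) : ℂ) := by
  rw [lamMinus, discRoot_of_nonneg h]
  push_cast
  ring

theorem mul_lamPlus_sub_lamMinus (hγ : γ ≠ 0) :
    (γ : ℂ) * (lamPlus γ ξ - lamMinus γ ξ) = discRoot γ ξ := by
  have : (γ : ℂ) ≠ 0 := Complex.ofReal_ne_zero.mpr hγ
  rw [lamPlus, lamMinus]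
  field_simp
  ring

theorem half_le_norm_discRoot (h : 4 * γ * ‖ξ‖ ^ 2 ≤ 3 / 4) : 1 / 2 ≤ ‖discRoot γ ξ‖ := by
  rw [discRoot_of_nonneg (by linarith), Complex.norm_real, Real.norm_of_nonneg (Real.sqrt_nonneg _)]
  exact (Real.le_sqrt (by norm_num) (by linarith)).mpr (by linarith)

theorem lamPlus_re_le (hγ : 0 < γ) (h : 4 * γ * ‖ξ‖ ^ 2 ≤ 1) : (lamPlus γ ξ).re ≤ -‖ξ‖ ^ 2 := by
  rw [lamPlus_of_nonneg (by linarith), Complex.ofReal_re]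
  exact neg_one_add_sqrt_div_le hγ h

theorem lamMinus_re_le_lamPlus_re (hγ : 0 < γ) (h : 4 * γ * ‖ξ‖ ^ 2 ≤ 1) :
    (lamMinus γ ξ).re ≤ (lamPlus γ ξ).re := by
  rw [lamPlus_of_nonneg (by linarith), lamMinus_of_nonneg (by linarith), Complex.ofReal_re,
    Complex.ofReal_re]
  gcongr
  linarith [Real.sqrt_nonneg (1 - 4 * γ * ‖ξ‖ ^ 2)]

theorem norm_exp_lamPlus_mul_le (hγ : 0 < γ) (h : 4 * γ * ‖ξ‖ ^ 2 ≤ 1) {t : ℝ} (ht : 0 ≤ t) :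
    ‖Complex.exp (lamPlus γ ξ * t)‖ ≤ Real.exp (-(‖ξ‖ ^ 2 * t)) :=
  norm_exp_mul_ofReal_le (lamPlus_re_le hγ h) ht

theorem norm_exp_lamMinus_mul_le (hγ : 0 < γ) (h : 4 * γ * ‖ξ‖ ^ 2 ≤ 1) {t : ℝ} (ht : 0 ≤ t) :
    ‖Complex.exp (lamMinus γ ξ * t)‖ ≤ Real.exp (-(‖ξ‖ ^ 2 * t)) :=
  norm_exp_mul_ofReal_le ((lamMinus_re_le_lamPlus_re hγ h).trans (lamPlus_re_le hγ h)) ht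

theorem norm_K0hat_le (hγ : 0 < γ) (h : 4 * γ * ‖ξ‖ ^ 2 ≤ 1) {t : ℝ} (ht : 0 ≤ t) :
    ‖K0hat γ ξ t‖ ≤ Real.exp (-(‖ξ‖ ^ 2 * t)) := by
  rw [K0hat, norm_div, Complex.norm_two, div_le_iff₀ two_pos]
  linarith [norm_add_le (Complex.exp (lamPlus γ ξ * t)) (Complex.exp (lamMinus γ ξ * t)),
    norm_exp_lamPlus_mul_le hγ h ht, norm_exp_lamMinus_mul_le hγ h ht]

theorem norm_K1hat_le (hγ : 0 < γ) (h : 4 * γ * ‖ξ‖ ^ 2 ≤ 3 / 4) {t : ℝ} (ht : 0 ≤ t) :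
    ‖K1hat γ ξ t‖ ≤ 4 * Real.exp (-(‖ξ‖ ^ 2 * t)) := by
  have hden := half_le_norm_discRoot h
  rw [K1hat, norm_div, mul_lamPlus_sub_lamMinus hγ.ne', div_le_iff₀ (by linarith)]
  have hnum : ‖Complex.exp (lamPlus γ ξ * t) - Complex.exp (lamMinus γ ξ * t)‖ ≤
      2 * Real.exp (-(‖ξ‖ ^ 2 * t)) := by
    linarith [norm_sub_le (Complex.exp (lamPlus γ ξ * t)) (Complex.exp (lamMinus γ ξ * t)),
      norm_exp_lamPlus_mul_le hγ (by linarith) ht, norm_exp_lamMinus_mul_le hγ (by linarith) ht]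
  nlinarith [Real.exp_pos (-(‖ξ‖ ^ 2 * t))]

end

/-- Low-frequency bounds: for `4γ|ξ|² < 3/4` and `t > 0`,
`|K̂₀(ξ,t)| ≤ C e^{-|ξ|²t}` and `|K̂₁(ξ,t)| ≤ C e^{-|ξ|²t}`. -/
theorem stmt_7 :
    ∃ C : ℝ, 0 < C ∧ ∀ (γ t : ℝ) (ξ : EuclideanSpace ℝ (Fin 2)),
      0 < γ → 0 < t → 4 * γ * ‖ξ‖ ^ 2 < 3/4 →
        ‖K0hat γ ξ t‖ ≤ C * Real.exp (-(‖ξ‖ ^ 2 * t)) ∧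
        ‖K1hat γ ξ t‖ ≤ C * Real.exp (-(‖ξ‖ ^ 2 * t)) := by
  refine ⟨4, by norm_num, fun γ t ξ hγ ht hlow => ⟨?_, norm_K1hat_le hγ hlow.le ht.le⟩⟩
  calc ‖K0hat γ ξ t‖ ≤ Real.exp (-(‖ξ‖ ^ 2 * t)) := norm_K0hat_le hγ (by linarith) ht.le
    _ ≤ 4 * Real.exp (-(‖ξ‖ ^ 2 * t)) := by linarith [Real.exp_pos (-(‖ξ‖ ^ 2 * t))]

end
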